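/- Let V be a finite-dimensional real inner product space, let g be a self-adjoint bijective linear map on V whose positive eigenvalue count is p and negative eigenvalue count is n - p, and let η be a self-adjoint orthogonal involution on V whose +1 eigenspace has dimension p and -1 eigenspace has dimension n - p. Then there exists an invertible linear map h : V →ₗ[ℝ] V such that g = h† ∘ η ∘ h. -/

import Mathlib

open RealInnerProductSpace

theorem gauge_extensor_exists
    {V : Type*} [NormedAddCommGroup V] [InnerProductSpace ℝ V] [FiniteDimensional ℝ V]
    {n p : ℕ}
    (g : V →ₗ[ℝ] V)
    (hg_sa : LinearMap.adjoint g = g)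
    (hg_bij : Function.Bijective g)
    (v : OrthonormalBasis (Fin n) ℝ V) (lam : Fin n → ℝ)
    (hgv : ∀ k : Fin n, g (v k) = lam k • v k)
    (hlam_ne : ∀ k : Fin n, lam k ≠ 0)
    (hlam_sign : ∀ k : Fin n, 0 < lam k ↔ (k : ℕ) < p)
    (η : V →ₗ[ℝ] V)
    (hη_sa : LinearMap.adjoint η = η)
    (hη_inv : η ∘ₗ η = LinearMap.id)
    (u : OrthonormalBasis (Fin n) ℝ V)
    (hηu : ∀ k : Fin n, η (u k) = if (k : ℕ) < p then u k else -(u k)) :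
    ∃ h : V →ₗ[ℝ] V, Function.Bijective h ∧ g = LinearMap.adjoint h ∘ₗ η ∘ₗ h := by
  set s : Fin n → ℝ := fun k => Real.sqrt |lam k| with hs
  have hspos : ∀ k, 0 < s k := fun k =>
    Real.sqrt_pos.2 (abs_pos.2 (hlam_ne k))
  have hss : ∀ k, s k * s k = |lam k| := fun k =>
    Real.mul_self_sqrt (abs_nonneg _)
  set h : V →ₗ[ℝ] V := Module.Basis.constr v.toBasis ℝ (fun k => s k • u k) with hdef
  set h' : V →ₗ[ℝ] V := Module.Basis.constr u.toBasis ℝ (fun k => s k • v k) with h'def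
  set hinv : V →ₗ[ℝ] V := Module.Basis.constr u.toBasis ℝ (fun k => (s k)⁻¹ • v k) with hinvdef
  have hv : ∀ k, h (v k) = s k • u k := by
    intro k
    have := Module.Basis.constr_basis v.toBasis ℝ (fun k => s k • u k) k
    simpa [hdef] using this
  have h'u : ∀ k, h' (u k) = s k • v k := by
    intro k
    have := Module.Basis.constr_basis u.toBasis ℝ (fun k => s k • v k) k
    simpa [h'def] using this
  have hinvu : ∀ k, hinv (u k) = (s k)⁻¹ • v k := by
    intro k
    have := Module.Basis.constr_basis u.toBasis ℝ (fun k => (s k)⁻¹ • v k) k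
    simpa [hinvdef] using this
  -- adjoint of h is h'
  have hadj : h' = LinearMap.adjoint h := by
    rw [LinearMap.eq_adjoint_iff_basis u.toBasis v.toBasis]
    intro i j
    rw [OrthonormalBasis.coe_toBasis, OrthonormalBasis.coe_toBasis, h'u, hv,
      real_inner_smul_left, real_inner_smul_right,
      orthonormal_iff_ite.mp v.orthonormal i j, orthonormal_iff_ite.mp u.orthonormal i j]
    by_cases hij : i = j <;> simp [hij]
  -- bijectivity
  have hleft : hinv ∘ₗ h = LinearMap.id := by
    apply v.toBasis.ext
    intro k
    simp [OrthonormalBasis.coe_toBasis, hv, hinvu, map_smul,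
      smul_smul, mul_inv_cancel₀ (hspos k).ne']
  have hright : h ∘ₗ hinv = LinearMap.id := by
    apply u.toBasis.ext
    intro k
    simp [OrthonormalBasis.coe_toBasis, hv, hinvu, map_smul,
      smul_smul, inv_mul_cancel₀ (hspos k).ne']
  have hbij : Function.Bijective h := by
    constructor
    · intro x y hxy
      have : hinv (h x) = hinv (h y) := by rw [hxy]
      simpa [LinearMap.ext_iff] using congrArg (fun f => f x) hleft |>.symm.trans
        (this.trans (congrArg (fun f => f y) hleft))
    · intro y
      exact ⟨hinv y, congrArg (fun f => f y) hright⟩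
  refine ⟨h, hbij, ?_⟩
  apply v.toBasis.ext
  intro k
  rw [OrthonormalBasis.coe_toBasis]
  rw [hgv k]
  rw [LinearMap.comp_apply, LinearMap.comp_apply, hv, map_smul, hηu k, ← hadj]
  by_cases hk : (k : ℕ) < p
  · have hlampos : 0 < lam k := (hlam_sign k).2 hk
    simp only [hk, if_pos, map_smul, h'u, smul_smul, hss k, abs_of_pos hlampos]
  · have hlamneg : lam k < 0 := by
      rcases lt_trichotomy (lam k) 0 with h1 | h1 | h1
      · exact h1
      · exact absurd h1 (hlam_ne k)
      · exact absurd ((hlam_sign k).1 h1) hk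
    simp only [hk, if_neg, not_false_iff, smul_neg, map_neg, map_smul, h'u,
      smul_smul, hss k, abs_of_neg hlamneg]
    simp
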